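/- A subset R of S^n_+ ∩ V is an extreme ray of the closed convex cone S^n_+ ∩ V if and only if R = ℝ₊·(Tᵀ·I^{{i}}·T) for some T ∈ 𝕋_++ and some i ∈ {1,…,r}. -/

import Mathlib

noncomputable section
open scoped Classical
open Matrix

/-- A face of a convex cone `C`: a nonempty convex subset `F ⊆ C` such that whenever the open
segment between two points of `C` meets `F`, both endpoints lie in `F`. -/
def IsFaceOf {E : Type*} [AddCommGroup E] [Module ℝ E] (F C : Set E) : Prop :=
  F.Nonempty ∧ F ⊆ C ∧ Convex ℝ F ∧
    ∀ x ∈ C, ∀ y ∈ C, (∃ t : ℝ, 0 < t ∧ t < 1 ∧ t • x + (1 - t) • y ∈ F) → x ∈ F ∧ y ∈ F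

/-- An extreme ray of `C`: a face whose linear span is one-dimensional. -/
def IsExtremeRayOf {E : Type*} [AddCommGroup E] [Module ℝ E] (R C : Set E) : Prop :=
  IsFaceOf R C ∧ Module.finrank ℝ (Submodule.span ℝ R) = 1

/-- `x` is a sum of at most `m` points, each lying on an extreme ray of `C`. -/
def SumExtreme {E : Type*} [AddCommGroup E] [Module ℝ E] (C : Set E) (m : ℕ) (x : E) : Prop :=
  ∃ (k : ℕ) (f : Fin k → E), k ≤ m ∧ (∀ i, ∃ R, IsExtremeRayOf R C ∧ f i ∈ R) ∧ x = ∑ i, f i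

/-- The Carathéodory number of the cone `C`. -/
def caraNumber {E : Type*} [AddCommGroup E] [Module ℝ E] (C : Set E) : ℕ :=
  sInf {m | ∀ x ∈ C, SumExtreme C m x}

/-- The ray generated by a point. -/
def ray {E : Type*} [AddCommGroup E] [Module ℝ E] (A : E) : Set E :=
  {X | ∃ c : ℝ, 0 ≤ c ∧ X = c • A}

/-- The trace (Frobenius) inner product on spaces of rectangular real matrices. -/
def trInner {a b : Type*} [Fintype a] [Fintype b] (X Y : Matrix a b ℝ) : ℝ :=
  Matrix.trace (Xᵀ * Y)

/-- `y` is the orthogonal projection of `x` onto the subspace `W` (with respect to the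
trace inner product). -/
def IsProjOn {a b : Type*} [Fintype a] [Fintype b] (W : Set (Matrix a b ℝ))
    (x y : Matrix a b ℝ) : Prop :=
  y ∈ W ∧ ∀ w ∈ W, trInner (x - y) w = 0

/-- The image of the set `S` under orthogonal projection onto the subspace `W`. -/
def projSet {a b : Type*} [Fintype a] [Fintype b] (W S : Set (Matrix a b ℝ)) :
    Set (Matrix a b ℝ) :=
  {y | ∃ x ∈ S, IsProjOn W x y}

/-- The cone of positive semidefinite matrices. -/
def PSD (ι : Type*) [Fintype ι] : Set (Matrix ι ι ℝ) := {X | X.PosSemidef}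

variable {r : ℕ}

/-- Index type for an `n₁ + ⋯ + n_r` block partition. -/
abbrev BIx (n : Fin r → ℕ) : Type := Σ i : Fin r, Fin (n i)

/-- The `(i,j)` block of a block matrix. -/
def blk {n : Fin r → ℕ} (X : Matrix (BIx n) (BIx n) ℝ) (i j : Fin r) :
    Matrix (Fin (n i)) (Fin (n j)) ℝ :=
  Matrix.of fun a b => X ⟨i, a⟩ ⟨j, b⟩

/-- The space `V` of symmetric block matrices whose blocks lie in the subspaces `Vb i j`
(for `i ≤ j`; the diagonal subspaces `Vb i i` are required elsewhere to be `ℝ·I`). -/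
def Vset (n : Fin r → ℕ)
    (Vb : ∀ i j : Fin r, Submodule ℝ (Matrix (Fin (n i)) (Fin (n j)) ℝ)) :
    Set (Matrix (BIx n) (BIx n) ℝ) :=
  {X | X.IsSymm ∧ ∀ i j : Fin r, i ≤ j → blk X i j ∈ Vb i j}

/-- The set `𝕋` of upper block-triangular matrices with diagonal blocks in `ℝ·I` and
off-diagonal blocks in the `Vb i j`. -/
def TT (n : Fin r → ℕ)
    (Vb : ∀ i j : Fin r, Submodule ℝ (Matrix (Fin (n i)) (Fin (n j)) ℝ)) :
    Set (Matrix (BIx n) (BIx n) ℝ) :=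
  {T | (∀ i j : Fin r, j < i → blk T i j = 0) ∧
    (∀ i : Fin r, ∃ c : ℝ, blk T i i = c • (1 : Matrix (Fin (n i)) (Fin (n i)) ℝ)) ∧
    (∀ i j : Fin r, i < j → blk T i j ∈ Vb i j)}

/-- The set `𝕋₊₊ ⊆ 𝕋` of matrices with positive diagonal entries. -/
def TTpp (n : Fin r → ℕ)
    (Vb : ∀ i j : Fin r, Submodule ℝ (Matrix (Fin (n i)) (Fin (n j)) ℝ)) :
    Set (Matrix (BIx n) (BIx n) ℝ) :=
  {T | (∀ i j : Fin r, j < i → blk T i j = 0) ∧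
    (∀ i : Fin r, ∃ c : ℝ, 0 < c ∧ blk T i i = c • (1 : Matrix (Fin (n i)) (Fin (n i)) ℝ)) ∧
    (∀ i j : Fin r, i < j → blk T i j ∈ Vb i j)}

/-- The Ishi spectrahedral cone `K = S^n_{++} ∩ V`. -/
def Kcone (n : Fin r → ℕ)
    (Vb : ∀ i j : Fin r, Submodule ℝ (Matrix (Fin (n i)) (Fin (n j)) ℝ)) :
    Set (Matrix (BIx n) (BIx n) ℝ) :=
  {X | X.PosDef ∧ X ∈ Vset n Vb}

/-- The closure `S^n_+ ∩ V` of the Ishi spectrahedral cone. -/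
def KclSet (n : Fin r → ℕ)
    (Vb : ∀ i j : Fin r, Submodule ℝ (Matrix (Fin (n i)) (Fin (n j)) ℝ)) :
    Set (Matrix (BIx n) (BIx n) ℝ) :=
  {X | X.PosSemidef ∧ X ∈ Vset n Vb}

/-- The dual cone `D = proj_V (S^n_+)` of `K` in `V`. -/
def dualD (n : Fin r → ℕ)
    (Vb : ∀ i j : Fin r, Submodule ℝ (Matrix (Fin (n i)) (Fin (n j)) ℝ)) :
    Set (Matrix (BIx n) (BIx n) ℝ) :=
  projSet (Vset n Vb) (PSD (BIx n))

/-- The subspace `V^B` of matrices of `V` supported on blocks indexed by `B × B`. -/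
def VBset (n : Fin r → ℕ)
    (Vb : ∀ i j : Fin r, Submodule ℝ (Matrix (Fin (n i)) (Fin (n j)) ℝ))
    (B : Finset (Fin r)) : Set (Matrix (BIx n) (BIx n) ℝ) :=
  {X | X ∈ Vset n Vb ∧ ∀ i j : Fin r, i ≤ j → (i ∉ B ∨ j ∉ B) → blk X i j = 0}

/-- The matrix `I^B` whose diagonal blocks indexed by `B` are identity blocks and whose
other blocks vanish. -/
def IB (n : Fin r → ℕ) (B : Finset (Fin r)) : Matrix (BIx n) (BIx n) ℝ :=
  Matrix.of fun a b => if a = b ∧ a.1 ∈ B then 1 else 0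

/-- The face `F_{T,B} = Tᵀ·(S^n_+ ∩ V^B)·T` of the closure `S^n_+ ∩ V`. -/
def FTB (n : Fin r → ℕ)
    (Vb : ∀ i j : Fin r, Submodule ℝ (Matrix (Fin (n i)) (Fin (n j)) ℝ))
    (T : Matrix (BIx n) (BIx n) ℝ) (B : Finset (Fin r)) :
    Set (Matrix (BIx n) (BIx n) ℝ) :=
  {Y | ∃ X, Matrix.PosSemidef X ∧ X ∈ VBset n Vb B ∧ Y = Tᵀ * X * T}

/-- The face `F^*_{T,N} = proj_V (T · proj_{V^N}(S^n_+) · Tᵀ)` of the dual cone. -/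
def FstarTN (n : Fin r → ℕ)
    (Vb : ∀ i j : Fin r, Submodule ℝ (Matrix (Fin (n i)) (Fin (n j)) ℝ))
    (T : Matrix (BIx n) (BIx n) ℝ) (N : Finset (Fin r)) :
    Set (Matrix (BIx n) (BIx n) ℝ) :=
  {Z | ∃ Y ∈ projSet (VBset n Vb N) (PSD (BIx n)), IsProjOn (Vset n Vb) (T * Y * Tᵀ) Z}


/-!
Every `X ∈ S^n_+ ∩ V` has a block Cholesky factorization `X = Tᵀ I^B T` with `T ∈ 𝕋₊₊`: if the
first surviving diagonal block of `X` is `s • I` with `s > 0`, then `X = Pᵀ (I^{p} + X') P` for an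
explicit `P ∈ 𝕋₊₊` and the Schur complement `X' = X - s⁻¹ X I^{p} X`, which is again PSD, lies in
`V` by [V2] and [V3], and has one more vanishing block row; if `s = 0` the block row already
vanishes. If `ℝ₊ X` is an extreme ray and `i ∈ B`, the summand `Tᵀ I^{i} T` of `X` must lie on the
ray, which forces `X = Tᵀ I^{i} T`. Conversely, if `x + y` lies on `ℝ₊ Tᵀ I^{i} T`, conjugating by
`T⁻¹` yields PSD matrices summing to a multiple of `I^{i}`, so `T⁻ᵀ x T⁻¹` is supported on the block
`(i, i)`, where membership of `x` in `V` makes it a scalar block; hence `x` lies on the ray.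
-/

section Cone
variable {E : Type*} [AddCommGroup E] [Module ℝ E] {C F : Set E}

lemma IsFaceOf.smul_mem (hC : ∀ x ∈ C, ∀ c : ℝ, 0 ≤ c → c • x ∈ C) (hF : IsFaceOf F C)
    {x : E} (hx : x ∈ F) {c : ℝ} (hc : 0 ≤ c) : c • x ∈ F := by
  have hxC := hF.2.1 hx
  -- `x` lies strictly between `c • x` and `(2 / (c + 1)) • x`, both of which lie in `C`
  have hcomb : (c + 2)⁻¹ • (c • x) + (1 - (c + 2)⁻¹) • ((2 / (c + 1)) • x) = x := by
    rw [smul_smul, smul_smul, ← add_smul]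
    convert one_smul ℝ x using 2
    field_simp
    ring
  refine (hF.2.2.2 _ (hC x hxC c hc) _ (hC x hxC _ (by positivity))
    ⟨(c + 2)⁻¹, by positivity, inv_lt_one_of_one_lt₀ (by linarith), hcomb ▸ hx⟩).1

lemma IsFaceOf.mem_of_add_mem (hC : ∀ x ∈ C, ∀ c : ℝ, 0 ≤ c → c • x ∈ C) (hF : IsFaceOf F C)
    {x y : E} (hx : x ∈ C) (hy : y ∈ C) (h : x + y ∈ F) : x ∈ F := by
  have hcomb : (1 / 2 : ℝ) • ((2 : ℝ) • x) + (1 - 1 / 2 : ℝ) • ((2 : ℝ) • y) = x + y := by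
    rw [smul_smul, smul_smul]; norm_num
  have h2x := (hF.2.2.2 _ (hC x hx 2 zero_le_two) _ (hC y hy 2 zero_le_two)
    ⟨1 / 2, by norm_num, by norm_num, hcomb ▸ h⟩).1
  simpa [smul_smul] using hF.smul_mem hC h2x (c := 1 / 2) (by norm_num)

lemma span_ray (A : E) : Submodule.span ℝ (ray A) = Submodule.span ℝ {A} := by
  refine le_antisymm (Submodule.span_le.mpr ?_) (Submodule.span_mono ?_)
  · rintro x ⟨c, -, rfl⟩
    exact Submodule.smul_mem _ c (Submodule.mem_span_singleton_self A)
  · rintro x rfl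
    exact ⟨1, zero_le_one, (one_smul ℝ x).symm⟩

lemma IsExtremeRayOf.exists_eq_ray (hC : ∀ x ∈ C, ∀ c : ℝ, 0 ≤ c → c • x ∈ C)
    (hCpointed : ∀ x ∈ C, -x ∈ C → x = 0) {R : Set E} (hR : IsExtremeRayOf R C) :
    ∃ A ∈ R, A ≠ 0 ∧ R = ray A := by
  obtain ⟨hF, hrank⟩ := hR
  obtain ⟨A, hAR, hA0⟩ : ∃ A ∈ R, A ≠ 0 := by
    by_contra! h
    rw [Submodule.span_eq_bot.mpr h, finrank_bot] at hrank
    exact zero_ne_one hrank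
  have : FiniteDimensional ℝ (Submodule.span ℝ R) := Module.finite_of_finrank_eq_succ hrank
  have hspan : Submodule.span ℝ R = Submodule.span ℝ {A} :=
    (Submodule.eq_of_le_of_finrank_le (Submodule.span_mono (by simpa using hAR))
      (by rw [hrank, finrank_span_singleton hA0])).symm
  refine ⟨A, hAR, hA0, Set.Subset.antisymm (fun x hx => ?_) ?_⟩
  · obtain ⟨c, rfl⟩ := Submodule.mem_span_singleton.mp
      (hspan ▸ Submodule.subset_span hx : x ∈ Submodule.span ℝ {A})
    refine ⟨c, not_lt.mp fun hc => hA0 ?_, rfl⟩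
    refine hCpointed A (hF.2.1 hAR) ?_
    have := hC _ (hF.2.1 hx) (-c)⁻¹ (inv_pos.mpr (neg_pos.mpr hc)).le
    rwa [smul_smul, inv_neg, neg_mul, inv_mul_cancel₀ hc.ne, neg_smul, one_smul] at this
  · rintro x ⟨c, hc, rfl⟩
    exact hF.smul_mem hC hAR hc

lemma isExtremeRayOf_ray (hC : ∀ x ∈ C, ∀ c : ℝ, 0 ≤ c → c • x ∈ C) {A : E} (hA : A ∈ C)
    (hA0 : A ≠ 0) (hsummand : ∀ x ∈ C, ∀ y ∈ C, x + y ∈ ray A → x ∈ ray A) :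
    IsExtremeRayOf (ray A) C := by
  have hdiv : ∀ {t : ℝ} {x : E}, 0 < t → t • x ∈ ray A → x ∈ ray A := by
    rintro t x ht ⟨c, hc, hx⟩
    refine ⟨t⁻¹ * c, by positivity, ?_⟩
    rw [mul_smul, ← hx, smul_smul, inv_mul_cancel₀ ht.ne', one_smul]
  refine ⟨⟨⟨A, 1, zero_le_one, (one_smul ℝ A).symm⟩, ?_, ?_, ?_⟩, ?_⟩
  · rintro x ⟨c, hc, rfl⟩
    exact hC A hA c hc
  · rintro x ⟨c, hc, rfl⟩ y ⟨d, hd, rfl⟩ a b ha hb -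
    exact ⟨a * c + b * d, by positivity, by rw [add_smul, mul_smul, mul_smul]⟩
  · rintro x hx y hy ⟨t, ht0, ht1, hxy⟩
    have h1t : 0 < 1 - t := sub_pos.mpr ht1
    exact ⟨hdiv ht0 (hsummand _ (hC x hx t ht0.le) _ (hC y hy _ h1t.le) hxy),
      hdiv h1t (hsummand _ (hC y hy _ h1t.le) _ (hC x hx t ht0.le) (add_comm (t • x) _ ▸ hxy))⟩
  · rw [span_ray, finrank_span_singleton hA0]

end Cone

namespace Matrix.PosSemidef
variable {m : Type*} [Fintype m] {X Y : Matrix m m ℝ}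

lemma apply_eq_zero_of_diag_eq_zero (hX : X.PosSemidef) {a : m} (ha : X a a = 0) (b : m) :
    X a b = 0 := by
  classical
  have hcol := (hX.dotProduct_mulVec_zero_iff (Pi.single a 1)).mp (by simpa using ha)
  have := congrFun hcol b
  rw [mulVec_single_one] at this
  rw [← hX.isHermitian.apply a b]
  simpa using this

lemma eq_zero_of_neg (hX : X.PosSemidef) (hnX : (-X).PosSemidef) : X = 0 :=
  hX.trace_eq_zero_iff.mp
    (le_antisymm (by simpa using hnX.trace_nonneg) hX.trace_nonneg)

lemma apply_eq_zero_of_add_diag_eq_zero (hX : X.PosSemidef) (hY : Y.PosSemidef) {a : m}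
    (ha : (X + Y) a a = 0) (b : m) : X a b = 0 :=
  have hXa : X a a ≤ 0 := by
    rw [add_apply] at ha
    linarith [hY.diag_nonneg (i := a)]
  hX.apply_eq_zero_of_diag_eq_zero (le_antisymm hXa hX.diag_nonneg) b

end Matrix.PosSemidef

section Blocks
variable {n : Fin r → ℕ}

lemma blk_ext {X Y : Matrix (BIx n) (BIx n) ℝ} (h : ∀ i j, blk X i j = blk Y i j) : X = Y := by
  ext ⟨i, a⟩ ⟨j, b⟩
  exact congrFun (congrFun (h i j) a) b

@[simp] lemma blk_add (X Y : Matrix (BIx n) (BIx n) ℝ) (i j : Fin r) :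
    blk (X + Y) i j = blk X i j + blk Y i j := rfl

@[simp] lemma blk_sub (X Y : Matrix (BIx n) (BIx n) ℝ) (i j : Fin r) :
    blk (X - Y) i j = blk X i j - blk Y i j := rfl

@[simp] lemma blk_smul (c : ℝ) (X : Matrix (BIx n) (BIx n) ℝ) (i j : Fin r) :
    blk (c • X) i j = c • blk X i j := rfl

@[simp] lemma blk_zero (i j : Fin r) : blk (0 : Matrix (BIx n) (BIx n) ℝ) i j = 0 := rfl

@[simp] lemma blk_transpose (X : Matrix (BIx n) (BIx n) ℝ) (i j : Fin r) :
    blk Xᵀ i j = (blk X j i)ᵀ := rfl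

lemma blk_mul (X Y : Matrix (BIx n) (BIx n) ℝ) (i j : Fin r) :
    blk (X * Y) i j = ∑ k, blk X i k * blk Y k j := by
  ext a b
  simp only [blk, of_apply, mul_apply, Matrix.sum_apply, ← Finset.univ_sigma_univ,
    Finset.sum_sigma]

lemma IB_eq_diagonal (B : Finset (Fin r)) :
    IB n B = diagonal fun a => if a.1 ∈ B then 1 else 0 := by
  ext a b
  by_cases h : a = b
  · subst h; simp [IB]
  · simp [IB, h]

@[simp] lemma IB_transpose (B : Finset (Fin r)) : (IB n B)ᵀ = IB n B := by
  rw [IB_eq_diagonal, diagonal_transpose]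

lemma IB_mul_IB (A B : Finset (Fin r)) : IB n A * IB n B = IB n (A ∩ B) := by
  simp only [IB_eq_diagonal, diagonal_mul_diagonal, Finset.mem_inter, ite_and]
  congr! 2 with a
  split_ifs <;> simp

lemma IB_union {A B : Finset (Fin r)} (h : Disjoint A B) : IB n (A ∪ B) = IB n A + IB n B := by
  simp only [IB_eq_diagonal, diagonal_add, Finset.mem_union]
  congr! 2 with a
  have : a.1 ∈ A → a.1 ∉ B := fun hA => Finset.disjoint_left.mp h hA
  split_ifs <;> simp_all

@[simp] lemma IB_univ : IB n (Finset.univ : Finset (Fin r)) = 1 := by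
  simp [IB_eq_diagonal]

@[simp] lemma IB_empty : IB n (∅ : Finset (Fin r)) = 0 := by
  simp [IB_eq_diagonal]

lemma posSemidef_IB (B : Finset (Fin r)) : (IB n B).PosSemidef := by
  rw [IB_eq_diagonal]
  refine PosSemidef.diagonal fun a => ?_
  dsimp only
  split_ifs <;> norm_num

lemma blk_IB_mul (B : Finset (Fin r)) (M : Matrix (BIx n) (BIx n) ℝ) (i j : Fin r) :
    blk (IB n B * M) i j = if i ∈ B then blk M i j else 0 := by
  ext a b
  rw [IB_eq_diagonal, blk, of_apply, diagonal_mul]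
  split_ifs <;> simp [blk]

lemma blk_IB_self (B : Finset (Fin r)) (i : Fin r) :
    blk (IB n B) i i = if i ∈ B then 1 else 0 := by
  ext a b
  by_cases hab : a = b
  · subst hab; split_ifs <;> simp_all [blk, IB]
  · split_ifs <;> simp_all [blk, IB]

lemma blk_IB_of_ne (B : Finset (Fin r)) {i j : Fin r} (h : i ≠ j) : blk (IB n B) i j = 0 := by
  ext a b
  simp [blk, IB, h]

lemma blk_one_self (i : Fin r) : blk (1 : Matrix (BIx n) (BIx n) ℝ) i i = 1 := by
  rw [← IB_univ, blk_IB_self, if_pos (Finset.mem_univ i)]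

lemma blk_one_of_ne {i j : Fin r} (h : i ≠ j) : blk (1 : Matrix (BIx n) (BIx n) ℝ) i j = 0 := by
  rw [← IB_univ, blk_IB_of_ne _ h]

lemma blk_transpose_mul_IB_mul (M : Matrix (BIx n) (BIx n) ℝ) (B : Finset (Fin r))
    (j l : Fin r) : blk (Mᵀ * IB n B * M) j l = ∑ q ∈ B, (blk M q j)ᵀ * blk M q l := by
  rw [← IB_transpose B, ← transpose_mul, blk_mul]
  have hterm : ∀ q, (blk (IB n B * M) q j)ᵀ * blk M q l
      = if q ∈ B then (blk M q j)ᵀ * blk M q l else 0 := by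
    intro q
    rw [blk_IB_mul]
    split_ifs <;> simp
  simp only [blk_transpose, hterm, Finset.sum_ite_mem, Finset.univ_inter]

lemma blk_mul_IB (B : Finset (Fin r)) (M : Matrix (BIx n) (BIx n) ℝ) (i j : Fin r) :
    blk (M * IB n B) i j = if j ∈ B then blk M i j else 0 := by
  rw [← transpose_transpose (M * IB n B), transpose_mul, IB_transpose, blk_transpose, blk_IB_mul]
  split_ifs <;> simp

lemma IB_mul_eq_IB_of_subset {A B : Finset (Fin r)} {T : Matrix (BIx n) (BIx n) ℝ}
    (hT : IB n A * T = IB n A) (hBA : B ⊆ A) : IB n B * T = IB n B := by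
  rw [← Finset.inter_eq_left.mpr hBA, ← IB_mul_IB, Matrix.mul_assoc, hT]

lemma IB_single_mul_mul_IB_single {M : Matrix (BIx n) (BIx n) ℝ} {p : Fin r} {s : ℝ}
    (hM : blk M p p = s • 1) : IB n {p} * M * IB n {p} = s • IB n {p} := by
  refine blk_ext fun i j => ?_
  rw [blk_mul_IB, blk_IB_mul, blk_smul]
  by_cases hj : j = p
  · by_cases hi : i = p
    · subst hi hj
      simp [hM, blk_IB_self]
    · simp [hj, hi, blk_IB_of_ne _ (Ne.trans_eq hi hj.symm)]
  · by_cases hij : i = j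
    · subst hij
      simp [hj, blk_IB_self]
    · simp [hj, blk_IB_of_ne _ hij]

lemma IB_apply_self_of_mem {B : Finset (Fin r)} {i : Fin r} (hi : i ∈ B) (a : Fin (n i)) :
    IB n B ⟨i, a⟩ ⟨i, a⟩ = 1 := by
  simp [IB, hi]

end Blocks

section Ishi
variable {n : Fin r → ℕ} {Vb : ∀ i j : Fin r, Submodule ℝ (Matrix (Fin (n i)) (Fin (n j)) ℝ)}

-- The hypothesis `V_ii = ℝ·I` and Ishi's axioms [V1], [V2], [V3].

def ScalarOnDiag (Vb : ∀ i j : Fin r, Submodule ℝ (Matrix (Fin (n i)) (Fin (n j)) ℝ)) : Prop :=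
  ∀ i : Fin r, Vb i i = Submodule.span ℝ {(1 : Matrix (Fin (n i)) (Fin (n i)) ℝ)}

def MulClosed (Vb : ∀ i j : Fin r, Submodule ℝ (Matrix (Fin (n i)) (Fin (n j)) ℝ)) : Prop :=
  ∀ i j k : Fin r, i ≤ j → j ≤ k → ∀ A ∈ Vb i j, ∀ B ∈ Vb j k, A * B ∈ Vb i k

def TransposeMulClosed
    (Vb : ∀ i j : Fin r, Submodule ℝ (Matrix (Fin (n i)) (Fin (n j)) ℝ)) : Prop :=
  ∀ i j k : Fin r, i ≤ j → j < k → ∀ A ∈ Vb i j, ∀ B ∈ Vb i k, Aᵀ * B ∈ Vb j k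

def TransposeMulSelfScalar
    (Vb : ∀ i j : Fin r, Submodule ℝ (Matrix (Fin (n i)) (Fin (n j)) ℝ)) : Prop :=
  ∀ i j : Fin r, i ≤ j → ∀ A ∈ Vb i j,
    ∃ c : ℝ, Aᵀ * A = c • (1 : Matrix (Fin (n j)) (Fin (n j)) ℝ)

lemma ScalarOnDiag.smul_one_mem (hdiag : ScalarOnDiag Vb) (i : Fin r) (c : ℝ) :
    c • (1 : Matrix (Fin (n i)) (Fin (n i)) ℝ) ∈ Vb i i := by
  rw [hdiag i]
  exact Submodule.smul_mem _ c (Submodule.mem_span_singleton_self _)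

lemma ScalarOnDiag.exists_eq_smul_one (hdiag : ScalarOnDiag Vb) {i : Fin r}
    {A : Matrix (Fin (n i)) (Fin (n i)) ℝ} (hA : A ∈ Vb i i) : ∃ c : ℝ, A = c • 1 := by
  rw [hdiag i] at hA
  obtain ⟨c, rfl⟩ := Submodule.mem_span_singleton.mp hA
  exact ⟨c, rfl⟩

lemma one_mem_TTpp : (1 : Matrix (BIx n) (BIx n) ℝ) ∈ TTpp n Vb :=
  ⟨fun _ _ h => blk_one_of_ne h.ne', fun i => ⟨1, one_pos, by rw [blk_one_self, one_smul]⟩,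
    fun _ _ h => by rw [blk_one_of_ne h.ne]; exact zero_mem _⟩

lemma blk_mem_of_mem_TTpp (hdiag : ScalarOnDiag Vb) {T : Matrix (BIx n) (BIx n) ℝ}
    (hT : T ∈ TTpp n Vb) {i j : Fin r} (h : i ≤ j) : blk T i j ∈ Vb i j := by
  rcases h.lt_or_eq with h | rfl
  · exact hT.2.2 i j h
  · obtain ⟨c, -, hc⟩ := hT.2.1 i
    exact hc ▸ hdiag.smul_one_mem i c

lemma blk_mul_eq_zero_of_mem_TTpp {S T : Matrix (BIx n) (BIx n) ℝ} (hS : S ∈ TTpp n Vb)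
    (hT : T ∈ TTpp n Vb) {i q j : Fin r} (h : ¬(i ≤ q ∧ q ≤ j)) : blk S i q * blk T q j = 0 := by
  rw [not_and_or, not_le, not_le] at h
  rcases h with h | h
  · rw [hS.1 i q h, Matrix.zero_mul]
  · rw [hT.1 q j h, Matrix.mul_zero]

lemma mul_mem_TTpp (hdiag : ScalarOnDiag Vb) (hV1 : MulClosed Vb)
    {S T : Matrix (BIx n) (BIx n) ℝ} (hS : S ∈ TTpp n Vb) (hT : T ∈ TTpp n Vb) :
    S * T ∈ TTpp n Vb := by
  refine ⟨fun i j hji => ?_, fun i => ?_, fun i j hij => ?_⟩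
  · rw [blk_mul]
    exact Finset.sum_eq_zero fun q _ =>
      blk_mul_eq_zero_of_mem_TTpp hS hT fun h => (h.1.trans h.2).not_gt hji
  · obtain ⟨c, hc, hSc⟩ := hS.2.1 i
    obtain ⟨d, hd, hTd⟩ := hT.2.1 i
    refine ⟨c * d, mul_pos hc hd, ?_⟩
    have hoff : ∀ q ≠ i, blk S i q * blk T q i = 0 := fun q hq =>
      blk_mul_eq_zero_of_mem_TTpp hS hT fun h => hq (le_antisymm h.2 h.1)
    rw [blk_mul, Finset.sum_eq_single i (fun q _ hq => hoff q hq) (by simp), hSc, hTd,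
      Matrix.smul_mul, Matrix.mul_smul, Matrix.one_mul, smul_smul]
  · rw [blk_mul]
    refine Submodule.sum_mem _ fun q _ => ?_
    by_cases h : i ≤ q ∧ q ≤ j
    · exact hV1 i q j h.1 h.2 _ (blk_mem_of_mem_TTpp hdiag hS h.1) _
        (blk_mem_of_mem_TTpp hdiag hT h.2)
    · rw [blk_mul_eq_zero_of_mem_TTpp hS hT h]
      exact zero_mem _

lemma isUnit_det_of_mem_TTpp {T : Matrix (BIx n) (BIx n) ℝ} (hT : T ∈ TTpp n Vb) :
    IsUnit T.det := by
  have htri : T.BlockTriangular Sigma.fst := fun a b h => congrFun (congrFun (hT.1 _ _ h) a.2) b.2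
  rw [htri.det, isUnit_iff_ne_zero]
  refine Finset.prod_ne_zero_iff.mpr fun i _ => ?_
  obtain ⟨c, hc, hTc⟩ := hT.2.1 i
  have hblock : T.toSquareBlock Sigma.fst i = c • 1 := by
    ext ⟨⟨i', a⟩, hi'⟩ ⟨⟨j', b⟩, hj'⟩
    dsimp only at hi' hj'
    subst hi' hj'
    refine (congrFun (congrFun hTc a) b).trans ?_
    simp [Matrix.one_apply]
  rw [hblock, det_smul, det_one, mul_one]
  exact pow_ne_zero _ hc.ne'

def Vsubspace (n : Fin r → ℕ)
    (Vb : ∀ i j : Fin r, Submodule ℝ (Matrix (Fin (n i)) (Fin (n j)) ℝ)) :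
    Submodule ℝ (Matrix (BIx n) (BIx n) ℝ) where
  carrier := Vset n Vb
  add_mem' hX hY := ⟨hX.1.add hY.1, fun i j h => add_mem (hX.2 i j h) (hY.2 i j h)⟩
  zero_mem' := ⟨isSymm_zero, fun _ _ _ => zero_mem _⟩
  smul_mem' c _ hX := ⟨hX.1.smul c, fun i j h => Submodule.smul_mem _ c (hX.2 i j h)⟩

lemma smul_mem_KclSet {X : Matrix (BIx n) (BIx n) ℝ} (hX : X ∈ KclSet n Vb) {c : ℝ}
    (hc : 0 ≤ c) : c • X ∈ KclSet n Vb :=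
  ⟨hX.1.smul hc, (Vsubspace n Vb).smul_mem c hX.2⟩

lemma eq_zero_of_mem_KclSet_of_neg_mem {X : Matrix (BIx n) (BIx n) ℝ} (hX : X ∈ KclSet n Vb)
    (hnX : -X ∈ KclSet n Vb) : X = 0 :=
  hX.1.eq_zero_of_neg hnX.1

lemma transpose_mul_IB_mul_mem_KclSet (hdiag : ScalarOnDiag Vb) (hV2 : TransposeMulClosed Vb)
    (hV3 : TransposeMulSelfScalar Vb) {M : Matrix (BIx n) (BIx n) ℝ} {B : Finset (Fin r)}
    (hlow : ∀ q ∈ B, ∀ j, j < q → blk M q j = 0)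
    (hup : ∀ q ∈ B, ∀ j, q ≤ j → blk M q j ∈ Vb q j) :
    Mᵀ * IB n B * M ∈ KclSet n Vb := by
  refine ⟨by simpa using (posSemidef_IB B).conjTranspose_mul_mul_same M, ?_, fun j l hjl => ?_⟩
  · simp [IsSymm, transpose_mul, Matrix.mul_assoc]
  rw [blk_transpose_mul_IB_mul]
  refine Submodule.sum_mem _ fun q hq => ?_
  rcases lt_or_ge j q with hjq | hqj
  · rw [hlow q hq j hjq, transpose_zero, Matrix.zero_mul]
    exact zero_mem _
  rcases hjl.lt_or_eq with hjl | rfl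
  · exact hV2 q j l hqj hjl _ (hup q hq j hqj) _ (hup q hq l (hqj.trans hjl.le))
  · obtain ⟨c, hc⟩ := hV3 q j hqj _ (hup q hq j hqj)
    exact hc ▸ hdiag.smul_one_mem j c

lemma transpose_mul_IB_mul_mem_KclSet_of_mem_TTpp (hdiag : ScalarOnDiag Vb)
    (hV2 : TransposeMulClosed Vb) (hV3 : TransposeMulSelfScalar Vb)
    {T : Matrix (BIx n) (BIx n) ℝ} (hT : T ∈ TTpp n Vb) (B : Finset (Fin r)) :
    Tᵀ * IB n B * T ∈ KclSet n Vb :=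
  transpose_mul_IB_mul_mem_KclSet hdiag hV2 hV3 (fun q _ j => hT.1 q j)
    (fun _ _ _ => blk_mem_of_mem_TTpp hdiag hT)

end Ishi

section Matrices
variable {m : Type*} [Fintype m] {X E : Matrix m m ℝ} {s : ℝ}

lemma transpose_mul_mul_eq_schur [DecidableEq m] (hX : Xᵀ = X) (hE : Eᵀ = E)
    (hEXE : E * X * E = s • E) :
    (1 - s⁻¹ • (E * X))ᵀ * X * (1 - s⁻¹ • (E * X)) = X - s⁻¹ • (X * E * X) := by
  have h5 : X * E * X * E * X = s • (X * E * X) := by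
    calc X * E * X * E * X = X * (E * X * E) * X := by simp only [Matrix.mul_assoc]
      _ = s • (X * E * X) := by rw [hEXE, Matrix.mul_smul, Matrix.smul_mul]
  simp only [transpose_sub, transpose_one, transpose_smul, transpose_mul, hX, hE, Matrix.sub_mul,
    Matrix.mul_sub, Matrix.one_mul, Matrix.mul_one, Matrix.smul_mul, Matrix.mul_smul,
    ← Matrix.mul_assoc, h5, smul_smul]
  rcases eq_or_ne s 0 with rfl | hs
  · simp
  · rw [inv_mul_cancel₀ hs, one_smul, sub_self, smul_zero, sub_zero]

lemma posSemidef_schur [DecidableEq m] (hX : X.PosSemidef) (hE : Eᵀ = E)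
    (hEXE : E * X * E = s • E) :
    (X - s⁻¹ • (X * E * X)).PosSemidef := by
  have hXt : Xᵀ = X := by rw [← conjTranspose_eq_transpose_of_trivial]; exact hX.isHermitian
  rw [← transpose_mul_mul_eq_schur hXt hE hEXE]
  have := hX.conjTranspose_mul_mul_same (1 - s⁻¹ • (E * X))
  rwa [conjTranspose_eq_transpose_of_trivial] at this

lemma mul_schur_eq_zero (hEXE : E * X * E = s • E) (hs : s ≠ 0) :
    E * (X - s⁻¹ • (X * E * X)) = 0 := by
  rw [Matrix.mul_sub, Matrix.mul_smul, ← Matrix.mul_assoc, ← Matrix.mul_assoc, hEXE,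
    Matrix.smul_mul, smul_smul, inv_mul_cancel₀ hs, one_smul, sub_self]

lemma transpose_mul_add_schur_mul [DecidableEq m] (hX : Xᵀ = X) (hE : Eᵀ = E) (hEE : E * E = E)
    (hEXE : E * X * E = s • E) (hs : 0 < s) :
    (1 - E + (√s)⁻¹ • (E * X))ᵀ * (E + (X - s⁻¹ • (X * E * X))) * (1 - E + (√s)⁻¹ • (E * X))
      = X := by
  set X' := X - s⁻¹ • (X * E * X)
  set P := 1 - E + (√s)⁻¹ • (E * X)
  have hX'E : X' * E = 0 := by
    simpa [X', transpose_mul, hX, hE, Matrix.mul_assoc] using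
      congrArg transpose (mul_schur_eq_zero hEXE hs.ne')
  have hX'P : X' * P = X' := by
    simp only [P, Matrix.mul_add, Matrix.mul_sub, Matrix.mul_one, hX'E, Matrix.mul_smul,
      ← Matrix.mul_assoc, Matrix.zero_mul, smul_zero, sub_zero, add_zero]
  have hEP : E * P = (√s)⁻¹ • (E * X) := by
    simp only [P, Matrix.mul_add, Matrix.mul_sub, Matrix.mul_one, hEE, sub_self, zero_add,
      Matrix.mul_smul, ← Matrix.mul_assoc]
  have hPEP : Pᵀ * E * P = s⁻¹ • (X * E * X) := by
    calc Pᵀ * E * P = (E * P)ᵀ * (E * P) := by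
          rw [transpose_mul, hE, Matrix.mul_assoc Pᵀ E (E * P), ← Matrix.mul_assoc E E P, hEE,
            Matrix.mul_assoc]
      _ = s⁻¹ • (X * E * X) := by
          rw [hEP, transpose_smul, transpose_mul, hX, hE, Matrix.smul_mul, Matrix.mul_smul,
            smul_smul, ← mul_inv, Real.mul_self_sqrt hs.le, Matrix.mul_assoc X E,
            ← Matrix.mul_assoc E E, hEE, Matrix.mul_assoc]
  have hX'sym : X'ᵀ = X' := by
    simp [X', transpose_mul, hX, hE, Matrix.mul_assoc]
  calc Pᵀ * (E + X') * P = Pᵀ * E * P + Pᵀ * (X' * P) := by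
        rw [Matrix.mul_add Pᵀ E X', Matrix.add_mul (Pᵀ * E) (Pᵀ * X') P, Matrix.mul_assoc Pᵀ X']
    _ = s⁻¹ • (X * E * X) + X' := by
        rw [hPEP, hX'P, ← hX'sym, ← transpose_mul, hX'P, hX'sym]
    _ = X := add_sub_cancel _ _

lemma inv_transpose_mul_congr_mul_inv [DecidableEq m] {T : Matrix m m ℝ} (hT : IsUnit T.det)
    (M : Matrix m m ℝ) : (T⁻¹)ᵀ * (Tᵀ * M * T) * T⁻¹ = M := by
  rw [transpose_nonsing_inv, Matrix.mul_assoc Tᵀ,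
    nonsing_inv_mul_cancel_left Tᵀ _ (by rwa [det_transpose]),
    mul_nonsing_inv_cancel_right T M hT]

lemma transpose_mul_congr_inv_mul [DecidableEq m] {T : Matrix m m ℝ} (hT : IsUnit T.det)
    (M : Matrix m m ℝ) : Tᵀ * ((T⁻¹)ᵀ * M * T⁻¹) * T = M := by
  simpa [nonsing_inv_nonsing_inv T hT] using
    inv_transpose_mul_congr_mul_inv (isUnit_nonsing_inv_det T hT) M

end Matrices

section Factorization
variable {n : Fin r → ℕ} {Vb : ∀ i j : Fin r, Submodule ℝ (Matrix (Fin (n i)) (Fin (n j)) ℝ)}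

-- `IB n (lowBlocks k) * X = 0` says that the first `k` block rows of `X` vanish.
def lowBlocks (k : ℕ) : Finset (Fin r) := Finset.univ.filter fun i => (i : ℕ) < k

lemma lowBlocks_succ (p : Fin r) : lowBlocks (p + 1) = lowBlocks p ∪ {p} := by
  ext i
  simp [lowBlocks, le_iff_eq_or_lt, Fin.ext_iff]

lemma lowBlocks_mono {k l : ℕ} (h : k ≤ l) : lowBlocks k ⊆ (lowBlocks l : Finset (Fin r)) :=
  fun i => by simpa [lowBlocks] using fun hi : (i : ℕ) < k => hi.trans_le h

lemma lowBlocks_of_le {k : ℕ} (h : r ≤ k) : lowBlocks k = (Finset.univ : Finset (Fin r)) :=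
  Finset.filter_true_of_mem fun i _ => i.isLt.trans_le h

lemma disjoint_lowBlocks_self (p : Fin r) : Disjoint (lowBlocks p) {p} := by
  simp [lowBlocks]

lemma one_sub_add_smul_mem_TTpp {X : Matrix (BIx n) (BIx n) ℝ} {p : Fin r} {s : ℝ}
    (hX : X ∈ Vset n Vb) (hrow : ∀ j < p, blk X p j = 0) (hs : blk X p p = s • 1) (hs0 : 0 < s) :
    1 - IB n {p} + (√s)⁻¹ • (IB n {p} * X) ∈ TTpp n Vb := by
  have hblk : ∀ i j, blk (1 - IB n {p} + (√s)⁻¹ • (IB n {p} * X)) i j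
      = blk 1 i j - blk (IB n {p}) i j + if i = p then (√s)⁻¹ • blk X i j else 0 := by
    intro i j
    rw [blk_add, blk_sub, blk_smul, blk_IB_mul]
    by_cases h : i = p <;> simp [h]
  refine ⟨fun i j hji => ?_, fun i => ?_, fun i j hij => ?_⟩
  · rw [hblk, blk_one_of_ne hji.ne', blk_IB_of_ne _ hji.ne']
    split_ifs with h
    · subst h; rw [hrow j hji, smul_zero, sub_zero, add_zero]
    · simp
  · rw [hblk, blk_one_self, blk_IB_self]
    by_cases h : i = p
    · subst h
      refine ⟨√s, Real.sqrt_pos.mpr hs0, ?_⟩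
      simp only [Finset.mem_singleton_self, if_true, sub_self, zero_add, hs, smul_smul,
        inv_mul_eq_div, Real.div_sqrt]
    · exact ⟨1, one_pos, by simp [h]⟩
  · rw [hblk, blk_one_of_ne hij.ne, blk_IB_of_ne _ hij.ne, sub_zero, zero_add]
    split_ifs with h
    · subst h; exact Submodule.smul_mem _ _ (hX.2 i j hij.le)
    · exact zero_mem _

lemma IB_single_mul_eq_zero {X : Matrix (BIx n) (BIx n) ℝ} (hX : X.PosSemidef) {p : Fin r}
    {s : ℝ} (hs : blk X p p = s • 1) (hs0 : s ≤ 0) : IB n {p} * X = 0 := by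
  ext ⟨i, a⟩ ⟨j, b⟩
  rw [IB_eq_diagonal, diagonal_mul]
  split_ifs with h
  · rw [Finset.mem_singleton] at h
    subst h
    have hdiag : X ⟨i, a⟩ ⟨i, a⟩ = s := (congrFun (congrFun hs a) a).trans (by simp)
    rw [one_mul, hX.apply_eq_zero_of_diag_eq_zero (le_antisymm (hdiag ▸ hs0) hX.diag_nonneg)]
    rfl
  · simp

lemma exists_pivot (hdiag : ScalarOnDiag Vb) (hV2 : TransposeMulClosed Vb)
    (hV3 : TransposeMulSelfScalar Vb) {X : Matrix (BIx n) (BIx n) ℝ} (hX : X ∈ KclSet n Vb)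
    (p : Fin r) (hlow : IB n (lowBlocks p) * X = 0) :
    ∃ P ∈ TTpp n Vb, IB n (lowBlocks p) * P = IB n (lowBlocks p) ∧
      ∃ B₀ ⊆ ({p} : Finset (Fin r)), ∃ X' ∈ KclSet n Vb,
        IB n (lowBlocks ((p : ℕ) + 1)) * X' = 0 ∧ X = Pᵀ * (IB n B₀ + X') * P := by
  obtain ⟨s, hs⟩ := hdiag.exists_eq_smul_one (hX.2.2 p p le_rfl)
  have hsymm : Xᵀ = X := hX.2.1
  have hrow : ∀ j < p, blk X p j = 0 := by
    intro j hj
    have h := congrArg (blk · j p) hlow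
    simp only [blk_IB_mul, blk_zero, lowBlocks, Finset.mem_filter, Finset.mem_univ, true_and,
      Fin.val_fin_lt.mpr hj, if_true] at h
    rw [← hsymm, blk_transpose, h, transpose_zero]
  simp only [lowBlocks_succ, IB_union (disjoint_lowBlocks_self p), Matrix.add_mul]
  rcases le_or_gt s 0 with hs0 | hs0
  · refine ⟨1, one_mem_TTpp, Matrix.mul_one _, ∅, Finset.empty_subset _, X, hX, ?_, by simp⟩
    rw [hlow, IB_single_mul_eq_zero hX.1 hs hs0, add_zero]
  set E := IB n {p}
  have hE : Eᵀ = E := IB_transpose _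
  have hEE : E * E = E := by rw [IB_mul_IB, Finset.inter_self]
  have hEXE : E * X * E = s • E := IB_single_mul_mul_IB_single hs
  have hLE : IB n (lowBlocks p) * E = 0 := by
    rw [IB_mul_IB, Finset.disjoint_iff_inter_eq_empty.mp (disjoint_lowBlocks_self p), IB_empty]
  have hXEX : X * E * X ∈ KclSet n Vb := by
    have := transpose_mul_IB_mul_mem_KclSet hdiag hV2 hV3 (M := X) (B := {p})
      (by simpa using hrow) (by simpa using fun j => hX.2.2 p j)
    rwa [hsymm] at this
  refine ⟨_, one_sub_add_smul_mem_TTpp hX.2 hrow hs hs0, ?_, {p}, subset_rfl,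
    X - s⁻¹ • (X * E * X), ⟨posSemidef_schur hX.1 hE hEXE,
      (Vsubspace n Vb).sub_mem hX.2 ((Vsubspace n Vb).smul_mem _ hXEX.2)⟩, ?_,
    (transpose_mul_add_schur_mul hsymm hE hEE hEXE hs0).symm⟩
  · rw [Matrix.mul_add, Matrix.mul_sub, Matrix.mul_one, hLE, Matrix.mul_smul, ← Matrix.mul_assoc,
      hLE, Matrix.zero_mul, smul_zero, sub_zero, add_zero]
  · rw [mul_schur_eq_zero hEXE hs0.ne', Matrix.mul_sub, Matrix.mul_smul, ← Matrix.mul_assoc,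
      ← Matrix.mul_assoc, hlow, Matrix.zero_mul, Matrix.zero_mul, smul_zero, sub_zero, add_zero]

lemma exists_eq_transpose_mul_IB_mul_of_low (hdiag : ScalarOnDiag Vb) (hV1 : MulClosed Vb)
    (hV2 : TransposeMulClosed Vb) (hV3 : TransposeMulSelfScalar Vb) {k : ℕ} (hk : k ≤ r) :
    ∀ X ∈ KclSet n Vb, IB n (lowBlocks k) * X = 0 →
      ∃ T ∈ TTpp n Vb, IB n (lowBlocks k) * T = IB n (lowBlocks k) ∧
        ∃ B, Disjoint B (lowBlocks k) ∧ X = Tᵀ * IB n B * T := by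
  induction hk using Nat.decreasingInduction with
  | self =>
    intro X _ hlow
    rw [lowBlocks_of_le le_rfl, IB_univ, Matrix.one_mul] at hlow
    exact ⟨1, one_mem_TTpp, by simp, ∅, Finset.disjoint_empty_left _, by simp [hlow]⟩
  | of_succ k hk ih =>
    intro X hX hlow
    obtain ⟨P, hP, hLP, B₀, hB₀, X', hX', hlow', rfl⟩ :=
      exists_pivot hdiag hV2 hV3 hX ⟨k, hk⟩ hlow
    obtain ⟨S, hS, hLS, B, hB, rfl⟩ := ih X' hX' hlow'
    have hB₀low : B₀ ⊆ lowBlocks (k + 1) :=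
      hB₀.trans (by simp [lowBlocks])
    have hB₀S : IB n B₀ * S = IB n B₀ := IB_mul_eq_IB_of_subset hLS hB₀low
    have hSB₀S : Sᵀ * IB n B₀ * S = IB n B₀ := by
      calc Sᵀ * IB n B₀ * S = (IB n B₀ * S)ᵀ * (IB n B₀ * S) := by
            rw [transpose_mul, IB_transpose, Matrix.mul_assoc Sᵀ (IB n B₀) (IB n B₀ * S),
              ← Matrix.mul_assoc (IB n B₀), IB_mul_IB, Finset.inter_self, Matrix.mul_assoc]
        _ = IB n B₀ := by rw [hB₀S, IB_transpose, IB_mul_IB, Finset.inter_self]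
    refine ⟨S * P, mul_mem_TTpp hdiag hV1 hS hP, ?_, B₀ ∪ B, ?_, ?_⟩
    · rw [← Matrix.mul_assoc, IB_mul_eq_IB_of_subset hLS (lowBlocks_mono k.le_succ), hLP]
    · refine Finset.disjoint_union_left.mpr ⟨?_, hB.mono_right (lowBlocks_mono k.le_succ)⟩
      exact (Finset.disjoint_of_subset_left hB₀ (disjoint_lowBlocks_self ⟨k, hk⟩).symm)
    · rw [IB_union (hB.mono_right hB₀low).symm, transpose_mul]
      conv_lhs => rw [← hSB₀S]
      simp only [Matrix.mul_add, Matrix.add_mul, Matrix.mul_assoc]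

lemma exists_eq_transpose_mul_IB_mul (hdiag : ScalarOnDiag Vb) (hV1 : MulClosed Vb)
    (hV2 : TransposeMulClosed Vb) (hV3 : TransposeMulSelfScalar Vb)
    {X : Matrix (BIx n) (BIx n) ℝ} (hX : X ∈ KclSet n Vb) :
    ∃ T ∈ TTpp n Vb, ∃ B, X = Tᵀ * IB n B * T := by
  obtain ⟨T, hT, -, B, -, hXB⟩ := exists_eq_transpose_mul_IB_mul_of_low hdiag hV1 hV2 hV3
    (Nat.zero_le r) X hX (by simp [lowBlocks])
  exact ⟨T, hT, B, hXB⟩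

end Factorization

section Rays
variable {n : Fin r → ℕ} {Vb : ∀ i j : Fin r, Submodule ℝ (Matrix (Fin (n i)) (Fin (n j)) ℝ)}

lemma transpose_mul_IB_mul_ne_zero {T : Matrix (BIx n) (BIx n) ℝ} (hT : IsUnit T.det)
    {B : Finset (Fin r)} {i : Fin r} (hi : i ∈ B) (hn : 0 < n i) : Tᵀ * IB n B * T ≠ 0 := by
  intro h
  have h0 := congrFun (congrFun (inv_transpose_mul_congr_mul_inv hT (IB n B)) ⟨i, ⟨0, hn⟩⟩)
    ⟨i, ⟨0, hn⟩⟩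
  rw [h, Matrix.mul_zero, Matrix.zero_mul, IB_apply_self_of_mem hi] at h0
  exact zero_ne_one h0

lemma transpose_mul_IB_mul_eq_of_mem_ray {T : Matrix (BIx n) (BIx n) ℝ} (hT : IsUnit T.det)
    {B : Finset (Fin r)} {i : Fin r} (hi : i ∈ B) (hn : 0 < n i)
    (h : Tᵀ * IB n {i} * T ∈ ray (Tᵀ * IB n B * T)) : Tᵀ * IB n B * T = Tᵀ * IB n {i} * T := by
  obtain ⟨γ, -, hγ⟩ := h
  have hIB : IB n {i} = γ • IB n B := by
    simpa [inv_transpose_mul_congr_mul_inv hT, Matrix.mul_smul, Matrix.smul_mul] using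
      congrArg (fun M => (T⁻¹)ᵀ * M * T⁻¹) hγ
  have hγ1 : γ = 1 := by
    simpa [IB_apply_self_of_mem hi, IB_apply_self_of_mem (Finset.mem_singleton_self i)] using
      (congrFun (congrFun hIB ⟨i, ⟨0, hn⟩⟩) ⟨i, ⟨0, hn⟩⟩).symm
  rw [hγ, hγ1, one_smul]

lemma IB_single_mul_mul_IB_single_of_add_eq_smul {x y : Matrix (BIx n) (BIx n) ℝ}
    (hx : x.PosSemidef) (hy : y.PosSemidef) {i : Fin r} {c : ℝ} (hxy : x + y = c • IB n {i}) :
    IB n {i} * x * IB n {i} = x := by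
  have hrow : ∀ a b : BIx n, a.1 ≠ i → x a b = 0 := fun a b ha =>
    hx.apply_eq_zero_of_add_diag_eq_zero hy (by rw [hxy]; simp [IB, ha]) b
  ext a b
  simp only [IB_eq_diagonal, diagonal_mul, mul_diagonal, Finset.mem_singleton]
  by_cases ha : a.1 = i
  · by_cases hb : b.1 = i
    · simp [ha, hb]
    · rw [← hx.isHermitian.apply a b, hrow b a hb]
      simp [hb]
  · simp [ha, hrow a b ha]

lemma mem_ray_of_add_mem_ray (hdiag : ScalarOnDiag Vb) {T : Matrix (BIx n) (BIx n) ℝ}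
    (hT : T ∈ TTpp n Vb) {i : Fin r} (hn : 0 < n i) {x y : Matrix (BIx n) (BIx n) ℝ}
    (hx : x ∈ KclSet n Vb) (hy : y ∈ KclSet n Vb) (hxy : x + y ∈ ray (Tᵀ * IB n {i} * T)) :
    x ∈ ray (Tᵀ * IB n {i} * T) := by
  obtain ⟨c, -, hc⟩ := hxy
  have hTu := isUnit_det_of_mem_TTpp hT
  set E := IB n {i}
  have hE : Eᵀ = E := IB_transpose _
  have hpsd : ∀ {M}, M ∈ KclSet n Vb → ((T⁻¹)ᵀ * M * T⁻¹).PosSemidef := fun hM => by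
    simpa using hM.1.conjTranspose_mul_mul_same T⁻¹
  set x' := (T⁻¹)ᵀ * x * T⁻¹
  have hsum : x' + (T⁻¹)ᵀ * y * T⁻¹ = c • E := by
    simpa [x', Matrix.mul_add, Matrix.add_mul, Matrix.mul_smul, Matrix.smul_mul,
      inv_transpose_mul_congr_mul_inv hTu] using congrArg (fun M => (T⁻¹)ᵀ * M * T⁻¹) hc
  have hx' : x'.PosSemidef := hpsd hx
  have hxx' : x = Tᵀ * x' * T := (transpose_mul_congr_inv_mul hTu x).symm
  have hsupp : E * x' * E = x' := IB_single_mul_mul_IB_single_of_add_eq_smul hx' (hpsd hy) hsum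
  obtain ⟨γ, hγ⟩ := hdiag.exists_eq_smul_one (hx.2.2 i i le_rfl)
  obtain ⟨t, ht, hTt⟩ := hT.2.1 i
  have hETE : E * T * E = t • E := IB_single_mul_mul_IB_single hTt
  have hExE : E * x * E = γ • E := IB_single_mul_mul_IB_single hγ
  have hx'E : (t * t) • x' = γ • E := by
    calc (t * t) • x' = (E * T * E)ᵀ * x' * (E * T * E) := by
          rw [hETE, transpose_smul, hE, Matrix.smul_mul, Matrix.mul_smul, Matrix.smul_mul,
            smul_smul, hsupp]
      _ = E * x * E := by
          conv_rhs => rw [hxx', ← hsupp]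
          simp only [transpose_mul, hE, Matrix.mul_assoc]
      _ = γ • E := hExE
  have hx'eq : x' = ((t * t)⁻¹ * γ) • E := by
    rw [mul_smul, ← hx'E, smul_smul, inv_mul_cancel₀ (by positivity), one_smul]
  have hμ : 0 ≤ (t * t)⁻¹ * γ := by
    simpa [hx'eq, E, IB_apply_self_of_mem (Finset.mem_singleton_self i)] using
      hx'.diag_nonneg (i := ⟨i, ⟨0, hn⟩⟩)
  refine ⟨(t * t)⁻¹ * γ, hμ, ?_⟩
  rw [hxx', hx'eq, Matrix.mul_smul, Matrix.smul_mul]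

end Rays

theorem extreme_rays_of_closure_general (r : ℕ)
    (n : Fin r → ℕ) (hn : ∀ i, 0 < n i)
    (Vb : ∀ i j : Fin r, Submodule ℝ (Matrix (Fin (n i)) (Fin (n j)) ℝ))
    (hdiag : ∀ i : Fin r, Vb i i = Submodule.span ℝ {(1 : Matrix (Fin (n i)) (Fin (n i)) ℝ)})
    (hV1 : ∀ i j k : Fin r, i ≤ j → j ≤ k → ∀ A ∈ Vb i j, ∀ B ∈ Vb j k, A * B ∈ Vb i k)
    (hV2 : ∀ i j k : Fin r, i ≤ j → j < k → ∀ A ∈ Vb i j, ∀ B ∈ Vb i k, Aᵀ * B ∈ Vb j k)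
    (hV3 : ∀ i j : Fin r, i ≤ j → ∀ A ∈ Vb i j,
      ∃ c : ℝ, Aᵀ * A = c • (1 : Matrix (Fin (n j)) (Fin (n j)) ℝ))
    (R : Set (Matrix (BIx n) (BIx n) ℝ)) :
    IsExtremeRayOf R (KclSet n Vb) ↔
      ∃ T ∈ TTpp n Vb, ∃ i : Fin r, R = ray (Tᵀ * IB n {i} * T) := by
  have hsmul : ∀ X ∈ KclSet n Vb, ∀ c : ℝ, 0 ≤ c → c • X ∈ KclSet n Vb :=
    fun _ hX _ hc => smul_mem_KclSet hX hc
  have hmemK : ∀ {T}, T ∈ TTpp n Vb → ∀ B, Tᵀ * IB n B * T ∈ KclSet n Vb :=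
    fun hT B => transpose_mul_IB_mul_mem_KclSet_of_mem_TTpp hdiag hV2 hV3 hT B
  constructor
  · intro hR
    obtain ⟨A, hAR, hA0, rfl⟩ :=
      hR.exists_eq_ray hsmul fun _ hX hnX => eq_zero_of_mem_KclSet_of_neg_mem hX hnX
    obtain ⟨T, hT, B, rfl⟩ := exists_eq_transpose_mul_IB_mul hdiag hV1 hV2 hV3 (hR.1.2.1 hAR)
    obtain ⟨i, hi⟩ : B.Nonempty := Finset.nonempty_iff_ne_empty.mpr fun hB => hA0 (by simp [hB])
    have hsplit : IB n B = IB n {i} + IB n (B.erase i) := by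
      rw [← IB_union (Finset.disjoint_singleton_left.mpr (Finset.notMem_erase i B)),
        ← Finset.insert_eq, Finset.insert_erase hi]
    have hmem : Tᵀ * IB n {i} * T ∈ ray (Tᵀ * IB n B * T) :=
      hR.1.mem_of_add_mem hsmul (hmemK hT _) (hmemK hT _)
        (by rwa [← Matrix.add_mul, ← Matrix.mul_add, ← hsplit])
    exact ⟨T, hT, i, by
      rw [transpose_mul_IB_mul_eq_of_mem_ray (isUnit_det_of_mem_TTpp hT) hi (hn i) hmem]⟩
  · rintro ⟨T, hT, i, rfl⟩
    exact isExtremeRayOf_ray hsmul (hmemK hT _)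
      (transpose_mul_IB_mul_ne_zero (isUnit_det_of_mem_TTpp hT) (Finset.mem_singleton_self i)
        (hn i))
      fun x hx y hy => mem_ray_of_add_mem_ray hdiag hT (hn i) hx hy

/-- **Extreme rays of the closure of an Ishi spectrahedral cone.**
A subset `R` of `S^n_+ ∩ V` is an extreme ray of the closed convex cone `S^n_+ ∩ V` if and
only if `R = ℝ₊·(Tᵀ·I^{{i}}·T)` for some `T ∈ 𝕋₊₊` and some `i ∈ {1,…,r}`. -/
theorem extreme_rays_of_closure (r : ℕ) (hr : 1 ≤ r)
    (n : Fin r → ℕ) (hn : ∀ i, 0 < n i)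
    (Vb : ∀ i j : Fin r, Submodule ℝ (Matrix (Fin (n i)) (Fin (n j)) ℝ))
    (hdiag : ∀ i : Fin r, Vb i i = Submodule.span ℝ {(1 : Matrix (Fin (n i)) (Fin (n i)) ℝ)})
    (hV1 : ∀ i j k : Fin r, i ≤ j → j ≤ k → ∀ A ∈ Vb i j, ∀ B ∈ Vb j k, A * B ∈ Vb i k)
    (hV2 : ∀ i j k : Fin r, i ≤ j → j < k → ∀ A ∈ Vb i j, ∀ B ∈ Vb i k, Aᵀ * B ∈ Vb j k)
    (hV3 : ∀ i j : Fin r, i ≤ j → ∀ A ∈ Vb i j,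
      ∃ c : ℝ, Aᵀ * A = c • (1 : Matrix (Fin (n j)) (Fin (n j)) ℝ))
    (R : Set (Matrix (BIx n) (BIx n) ℝ)) (hR : R ⊆ KclSet n Vb) :
    IsExtremeRayOf R (KclSet n Vb) ↔
      ∃ T ∈ TTpp n Vb, ∃ i : Fin r, R = ray (Tᵀ * IB n {i} * T) :=
  extreme_rays_of_closure_general r n hn Vb hdiag hV1 hV2 hV3 R
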